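/- arXiv:2002.11455 — 4 statements merged into one kernel-verified Lean document; each statement's English description precedes it below -/
import Mathlib

section
/- Let G be a finite group, q a prime, and a ∈ G an element of q-power order. Let S_a = { b·a : b ∈ C_G(a), q ∤ o(b) } and D_a = { b⟨a⟩ ∈ C_G(a)/⟨a⟩ : q ∤ o(b⟨a⟩) } (cosets of q'-order in C_G(a)/⟨a⟩). Then the map f : S_a → D_a given by f(b·a) = b⟨a⟩ is a bijection, and for each element b·a ∈ S_a, o(b·a) divides o(f(b·a))·o(a). -/
section

variable {G : Type*} [Group G]

/-- `a` lies in its own centralizer. -/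
def selfMem (a : G) : a ∈ Subgroup.centralizer ({a} : Set G) :=
  Subgroup.mem_centralizer_iff.mpr (by rintro y rfl; rfl)

/-- The cyclic subgroup generated by `a` inside the centralizer `C_G(a)`. -/
def cycIn (a : G) : Subgroup (Subgroup.centralizer ({a} : Set G)) :=
  Subgroup.zpowers ⟨a, selfMem a⟩

instance cycIn_normal (a : G) : (cycIn a).Normal := by
  constructor
  intro n hn g
  obtain ⟨m, hm⟩ := Subgroup.mem_zpowers_iff.mp hn
  refine Subgroup.mem_zpowers_iff.mpr ⟨m, ?_⟩
  have hg : (g : G) ∈ Subgroup.centralizer ({a} : Set G) := g.2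
  have hga : Commute (g : G) a := (Subgroup.mem_centralizer_iff.mp hg a rfl).symm
  have hcomm : Commute (g : G) (a ^ m) := hga.zpow_right m
  ext
  push_cast
  rw [← hm]
  push_cast
  rw [hcomm.eq, mul_assoc, mul_inv_cancel, mul_one]

end

/-- Lemma: for `a` of `q`-power order, the map `b·a ↦ b⟨a⟩` is a bijection from
`S_a = { b·a : b ∈ C_G(a), q ∤ o(b) }` onto the set of cosets of `q'`-order in
`C_G(a)/⟨a⟩`, and `o(b·a)` divides `o(b⟨a⟩)·o(a)`. -/
theorem stmt1 {G : Type*} [Group G] [Fintype G] (q : ℕ) (hq : q.Prime)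
    (a : G) (k : ℕ) (ha : orderOf a = q ^ k)
    (S : Set G)
    (hS : S = {x | ∃ b ∈ Subgroup.centralizer ({a} : Set G), ¬ q ∣ orderOf b ∧ x = b * a})
    (D : Set (Subgroup.centralizer ({a} : Set G) ⧸ cycIn a))
    (hD : D = {c | ¬ q ∣ orderOf c}) :
    ∃ f : S ≃ D,
      (∀ (b : G) (hb : b ∈ Subgroup.centralizer ({a} : Set G)) (_ : ¬ q ∣ orderOf b)
          (hx : b * a ∈ S),
        (f ⟨b * a, hx⟩ : Subgroup.centralizer ({a} : Set G) ⧸ cycIn a)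
          = QuotientGroup.mk (⟨b, hb⟩ : Subgroup.centralizer ({a} : Set G))) ∧
      ∀ x : S, orderOf (x : G) ∣
        orderOf (f x : Subgroup.centralizer ({a} : Set G) ⧸ cycIn a) * orderOf a := by
  classical
  set C := Subgroup.centralizer ({a} : Set G) with hCdef
  have haC : a ∈ C := selfMem a
  set a' : C := (⟨a, haC⟩ : C) with ha'def
  have hao : orderOf a' = q ^ k := by rw [Subgroup.orderOf_mk, ha]
  have hmka' : (QuotientGroup.mk a' : C ⧸ cycIn a) = 1 :=
    (QuotientGroup.eq_one_iff a').mpr (Subgroup.mem_zpowers a')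
  have hcomm : ∀ b : C, Commute (b : G) a := fun b =>
    (Subgroup.mem_centralizer_iff.mp b.2 a rfl).symm
  have hcommC : ∀ b : C, Commute b a' := fun b => Subtype.ext (hcomm b)
  -- orderOf of zpowers of a' divides q^k
  have hzpow : ∀ m : ℤ, orderOf (a' ^ m) ∣ q ^ k := by
    intro m
    apply orderOf_dvd_of_pow_eq_one
    rw [← zpow_natCast (a' ^ m), ← zpow_mul, mul_comm, zpow_mul, zpow_natCast, ← hao,
      pow_orderOf_eq_one, one_zpow]
  have hcop : ∀ m : ℕ, ¬ q ∣ m → Nat.Coprime (q ^ k) m := fun m hm =>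
    ((Nat.Prime.coprime_iff_not_dvd hq).mpr hm).pow_left k
  have heq_one : ∀ (z : C) (m : ℕ), ¬ q ∣ m → orderOf z ∣ q ^ k → orderOf z ∣ m → z = 1 := by
    intro z m hm h1 h2
    exact orderOf_eq_one_iff.mp (Nat.dvd_one.mp ((Nat.dvd_gcd h1 h2).trans (hcop m hm).dvd))
  -- membership of S in C
  have hmemC : ∀ x ∈ S, x ∈ C := by
    intro x hx
    rw [hS] at hx
    obtain ⟨b, hb, -, rfl⟩ := hx
    exact mul_mem hb haC
  set F : S → C ⧸ cycIn a := fun x => QuotientGroup.mk (⟨x.1, hmemC x.1 x.2⟩ : C) with hF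
  have hFval : ∀ (b : G) (hb : b ∈ C) (hx : b * a ∈ S),
      F ⟨b * a, hx⟩ = QuotientGroup.mk (⟨b, hb⟩ : C) := by
    intro b hb hx
    have h1 : (⟨b * a, hmemC _ hx⟩ : C) = ⟨b, hb⟩ * a' := Subtype.ext rfl
    show QuotientGroup.mk _ = _
    rw [h1, QuotientGroup.mk_mul, hmka', mul_one]
  -- order lifting
  have hA : ∀ b : C, ¬ q ∣ orderOf b →
      orderOf b ∣ orderOf (QuotientGroup.mk b : C ⧸ cycIn a) := by
    intro b hbq
    set d := orderOf (QuotientGroup.mk b : C ⧸ cycIn a) with hd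
    have h1 : (QuotientGroup.mk (b ^ d) : C ⧸ cycIn a) = 1 := by
      rw [QuotientGroup.mk_pow]
      exact pow_orderOf_eq_one _
    obtain ⟨m, hm⟩ := (QuotientGroup.eq_one_iff _).mp h1
    have h3 : orderOf (b ^ d) ∣ q ^ k := hm ▸ hzpow m
    have h4 : orderOf (b ^ d) ∣ orderOf b := orderOf_pow_dvd d
    have h5 : b ^ d = 1 := heq_one _ _ hbq h3 h4
    exact orderOf_dvd_of_pow_eq_one h5
  -- F lands in D
  have hFD : ∀ x : S, F x ∈ D := by
    intro ⟨x, hx⟩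
    have hx' := hx
    rw [hS] at hx'
    obtain ⟨b, hb, hbq, rfl⟩ := hx'
    rw [hFval b hb hx, hD, Set.mem_setOf_eq]
    intro hdvd
    exact hbq (by
      have : orderOf (QuotientGroup.mk (⟨b, hb⟩ : C) : C ⧸ cycIn a) ∣ orderOf b := by
        have := orderOf_map_dvd (QuotientGroup.mk' (cycIn a)) (⟨b, hb⟩ : C)
        rwa [Subgroup.orderOf_mk] at this
      exact hdvd.trans this)
  -- injectivity
  have hFinj : Function.Injective F := by
    intro ⟨x, hx⟩ ⟨y, hy⟩ hxy
    have hx' := hx; have hy' := hy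
    rw [hS] at hx' hy'
    obtain ⟨b, hb, hbq, rfl⟩ := hx'
    obtain ⟨c, hc, hcq, rfl⟩ := hy'
    rw [hFval b hb hx, hFval c hc hy] at hxy
    obtain ⟨m, hm⟩ := Subgroup.mem_zpowers_iff.mp ((QuotientGroup.eq ..).mp hxy)
    -- hm : a' ^ m = ⟨b,hb⟩⁻¹ * ⟨c,hc⟩
    have hbcomm : Commute (⟨b, hb⟩ : C)⁻¹ (⟨c, hc⟩ : C) := by
      have h1 : (⟨c, hc⟩ : C) = (⟨b, hb⟩ : C) * a' ^ m := by
        rw [hm, mul_inv_cancel_left]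
      rw [h1]
      exact ((Commute.refl _).mul_right ((hcommC _).zpow_right m)).inv_left
    have hlcm : orderOf (a' ^ m) ∣ Nat.lcm (orderOf b) (orderOf c) := by
      have h1 := hbcomm.orderOf_mul_dvd_lcm
      rw [← hm] at h1
      have e1 : orderOf ((⟨b, hb⟩ : C)⁻¹) = orderOf b := by
        rw [orderOf_inv, Subgroup.orderOf_mk]
      have e2 : orderOf ((⟨c, hc⟩ : C)) = orderOf c := Subgroup.orderOf_mk c hc
      rwa [e1, e2] at h1
    have hql : ¬ q ∣ Nat.lcm (orderOf b) (orderOf c) := by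
      intro h
      rcases (Nat.Prime.dvd_mul hq).mp
        (h.trans (Nat.lcm_dvd_mul _ _)) with h' | h'
      exacts [hbq h', hcq h']
    have hone : a' ^ m = 1 := heq_one _ _ hql (hzpow m) hlcm
    have : (⟨b, hb⟩ : C) = (⟨c, hc⟩ : C) := by
      rw [hone] at hm
      have := hm.symm
      rwa [inv_mul_eq_one] at this
    have hbc : b = c := congrArg Subtype.val this
    exact Subtype.ext (congrArg (fun z => z * a) hbc)
  -- surjectivity onto D
  have hFsurj : ∀ c ∈ D, ∃ x : S, F x = c := by
    intro c hc
    rw [hD, Set.mem_setOf_eq] at hc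
    obtain ⟨g, rfl⟩ := QuotientGroup.mk_surjective c
    set n := orderOf g with hn
    set e := n.factorization q with he
    set r := n / q ^ e with hr
    have hmulrn : q ^ e * r = n := Nat.ordProj_mul_ordCompl_eq_self n q
    have hnpos : 0 < n := orderOf_pos g
    have hqr : ¬ q ∣ r := Nat.not_dvd_ordCompl hq hnpos.ne'
    have hcop' : Nat.Coprime r (q ^ e) :=
      (((Nat.Prime.coprime_iff_not_dvd hq).mpr hqr).pow_left e).symm
    have hbez := Nat.gcd_eq_gcd_ab r (q ^ e)
    rw [hcop'] at hbez
    set t := Nat.gcdA r (q ^ e)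
    set s := Nat.gcdB r (q ^ e)
    -- hbez : (1:ℤ) = r * t + q^e * s
    set b : C := g ^ ((q : ℤ) ^ e * s) with hb
    have hbr : b ^ r = 1 := by
      rw [hb, ← zpow_natCast (g ^ ((q : ℤ) ^ e * s)), ← zpow_mul]
      refine orderOf_dvd_iff_zpow_eq_one.mp ⟨s, ?_⟩
      rw [← hn, ← hmulrn]
      push_cast
      ring
    have hbord : orderOf b ∣ r := orderOf_dvd_of_pow_eq_one hbr
    have hbq : ¬ q ∣ orderOf b := fun h => hqr (h.trans hbord)
    -- mk b = mk g
    have hocr : orderOf (QuotientGroup.mk g : C ⧸ cycIn a) ∣ r := by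
      have h1 : orderOf (QuotientGroup.mk g : C ⧸ cycIn a) ∣ n := by
        have := orderOf_map_dvd (QuotientGroup.mk' (cycIn a)) g
        exact this
      refine Nat.Coprime.dvd_of_dvd_mul_left
        (((Nat.Prime.coprime_iff_not_dvd hq).mpr hc).symm.pow_right e) ?_
      rwa [hmulrn]
    have hmkb : (QuotientGroup.mk b : C ⧸ cycIn a) = QuotientGroup.mk g := by
      rw [hb, QuotientGroup.mk_zpow]
      have hex : (q : ℤ) ^ e * s = 1 - r * t := by push_cast at hbez ⊢; linarith
      rw [hex, zpow_sub, zpow_one, zpow_mul, zpow_natCast,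
        orderOf_dvd_iff_pow_eq_one.mp hocr, one_zpow, inv_one, mul_one]
    have hbqG : ¬ q ∣ orderOf (b : G) := by rwa [Subgroup.orderOf_coe]
    have hxS : (b : G) * a ∈ S := by
      rw [hS]; exact ⟨b, b.2, hbqG, rfl⟩
    refine ⟨⟨(b : G) * a, hxS⟩, ?_⟩
    rw [hFval (b : G) b.2 hxS, ← hmkb]
  -- assemble the equiv
  let f0 : S → D := fun x => ⟨F x, hFD x⟩
  have hf0bij : Function.Bijective f0 := by
    constructor
    · intro x y hxy
      exact hFinj (congrArg Subtype.val hxy)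
    · intro ⟨c, hc⟩
      obtain ⟨x, hx⟩ := hFsurj c hc
      exact ⟨x, Subtype.ext hx⟩
  refine ⟨Equiv.ofBijective f0 hf0bij, ?_, ?_⟩
  · intro b hb hbq hx
    show F ⟨b * a, hx⟩ = _
    exact hFval b hb hx
  · intro ⟨x, hx⟩
    have hx' := hx
    rw [hS] at hx'
    obtain ⟨b, hb, hbq, rfl⟩ := hx'
    have hfx : (Equiv.ofBijective f0 hf0bij ⟨b * a, hx⟩ : C ⧸ cycIn a)
        = QuotientGroup.mk (⟨b, hb⟩ : C) := hFval b hb hx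
    rw [hfx]
    have h1 : orderOf (b * a) ∣ orderOf b * orderOf a :=
      (hcomm ⟨b, hb⟩).orderOf_mul_dvd_mul_orderOf
    have h2 : orderOf b ∣ orderOf (QuotientGroup.mk (⟨b, hb⟩ : C) : C ⧸ cycIn a) := by
      have := hA ⟨b, hb⟩ (by rwa [Subgroup.orderOf_mk])
      rwa [Subgroup.orderOf_mk] at this
    exact h1.trans (mul_dvd_mul h2 dvd_rfl)
end

section
/- Let G be a finite group of order n, N a normal subgroup of G, and D a central minimal normal subgroup of G with D ≤ N. Let x ∈ G and u ∈ C_n with o(xND) = o(u·C_{n,|ND|}) in the respective quotients. If there exists a bijection f̄ : xN/D → (u·C_{n,|N|})/C_{n,|D|} with o(xhD) dividing o(f̄(xhD)) for all h ∈ N, then there exists a bijection f : xN → u·C_{n,|N|} with o(xh) dividing o(f(xh)) for all h ∈ N. -/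
/-!
A central minimal normal subgroup `D` is elementary abelian of order `p ^ m`, and
`C = C_{n,|D|}` is the `p ^ m`-torsion of `C_n`. Both `xN` and `u C_{n,|N|}` are unions of
cosets of `D` resp. `C`, which `f̄` matches up, so it suffices to biject each coset `yD` onto
its partner `vC` preserving order divisibility. Put `k = o(yD)`, which divides `k'' = o(vC)`;
every element of `yD` has order dividing `k p`. If `p ∣ k''`, every element of `vC` has order
divisible by `k'' p`, so any bijection works. Otherwise both `k` and `k''` are prime to `p`, so
`yD` contains some `y₀` of order `k` and `vC` some `b₀` of order `k''`; sending `y₀ d` to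
`b₀ σ(d)` for a bijection `σ : D → C` with `σ 1 = 1` works, because `o(b₀ c) = k'' o(c)` is
divisible by `k'' p` for `c ≠ 1`.
-/

/-- `Cc n m` : the (unique, when `m ∣ n`) subgroup of order `m` of the cyclic group of
order `n`, realized as the subgroup of `Multiplicative (ZMod n)` generated by `n/m`. -/
def Cc (n m : ℕ) : Subgroup (Multiplicative (ZMod n)) :=
  Subgroup.zpowers (Multiplicative.ofAdd ((n / m : ℕ) : ZMod n))

theorem Nat.div_gcd_prime_pow_mul_dvd {p m a : ℕ} (hp : p.Prime) (hm : m ≠ 0)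
    (h : p ∣ a / a.gcd (p ^ m)) : a / a.gcd (p ^ m) * p ∣ a := by
  set g := a.gcd (p ^ m)
  have hg : g ∣ p ^ m := Nat.gcd_dvd_right a (p ^ m)
  have hcop : (a / g).Coprime (p ^ m / g) :=
    Nat.coprime_div_gcd_div_gcd (Nat.gcd_pos_of_pos_right a (pow_pos hp.pos m))
  have hquot : p ^ m / g = 1 := by
    obtain ⟨j, -, hj⟩ := (Nat.dvd_prime_pow hp).mp (Nat.div_dvd_of_dvd hg)
    rcases j with _ | j
    · simpa using hj
    · have hpq : p ∣ p ^ m / g := hj ▸ dvd_pow_self p j.succ_ne_zero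
      exact absurd (hcop ▸ Nat.dvd_gcd h hpq) hp.not_dvd_one
  calc a / g * p ∣ a / g * p ^ m := mul_dvd_mul_left _ (dvd_pow_self p hm)
    _ = a := by
      rw [← Nat.eq_of_dvd_of_div_eq_one hg hquot, Nat.div_mul_cancel (Nat.gcd_dvd_left a _)]

theorem orderOf_pow_prime_pow_mul_dvd {M : Type*} [Monoid M] {p m : ℕ} (hp : p.Prime)
    (hm : m ≠ 0) {b : M} (h : p ∣ orderOf (b ^ p ^ m)) :
    orderOf (b ^ p ^ m) * p ∣ orderOf b := by
  rw [orderOf_pow' b (pow_ne_zero m hp.ne_zero)] at h ⊢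
  exact Nat.div_gcd_prime_pow_mul_dvd hp hm h

theorem dvd_orderOf_of_pow_prime_pow_eq_one {M : Type*} [Monoid M] {p m : ℕ} (hp : p.Prime)
    {c : M} (hc : c ^ p ^ m = 1) (hc1 : c ≠ 1) : p ∣ orderOf c := by
  obtain ⟨j, -, hj⟩ := (Nat.dvd_prime_pow hp).mp (orderOf_dvd_of_pow_eq_one hc)
  rcases j with _ | j
  · exact absurd (orderOf_eq_one_iff.mp hj) hc1
  · exact hj ▸ dvd_pow_self p j.succ_ne_zero

theorem orderOf_mk_ker_powMonoidHom {M : Type*} [CommGroup M] (q : ℕ) (w : M) :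
    orderOf (w : M ⧸ (powMonoidHom q : M →* M).ker) = orderOf (w ^ q) := by
  rw [← orderOf_injective _ (QuotientGroup.kerLift_injective _), QuotientGroup.kerLift_mk,
    powMonoidHom_apply]

section Quotient

variable {G : Type*} [Group G] {D : Subgroup G}

theorem orderOf_dvd_orderOf_mk_mul [D.Normal] {q : ℕ} (hD : ∀ d ∈ D, d ^ q = 1) (g : G) :
    orderOf g ∣ orderOf (g : G ⧸ D) * q := by
  refine orderOf_dvd_of_pow_eq_one ?_
  rw [pow_mul]
  exact hD _
    ((QuotientGroup.eq_one_iff _).mp (by rw [QuotientGroup.mk_pow, pow_orderOf_eq_one]))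

theorem exists_mk_eq_and_orderOf_eq [D.Normal] (hDZ : D ≤ Subgroup.center G) {q : ℕ}
    (hD : ∀ d ∈ D, d ^ q = 1) (z : G ⧸ D) (hz : (orderOf z).Coprime q) :
    ∃ g : G, (g : G ⧸ D) = z ∧ orderOf g = orderOf z := by
  obtain ⟨g, rfl⟩ := QuotientGroup.mk_surjective z
  set k := orderOf (g : G ⧸ D)
  have hgk : g ^ k ∈ D :=
    (QuotientGroup.eq_one_iff _).mp (by rw [QuotientGroup.mk_pow, pow_orderOf_eq_one])
  -- `k` is prime to the order of `g ^ k`, so `g ^ k` has a `k`-th root `c` among its powers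
  obtain ⟨r, hr⟩ := exists_pow_eq_self_of_coprime
    (hz.coprime_dvd_right (orderOf_dvd_of_pow_eq_one (hD _ hgk)))
  set c := (g ^ k) ^ r
  have hcD : c⁻¹ ∈ D := inv_mem (pow_mem hgk r)
  have hck : c ^ k = g ^ k := by rw [← pow_mul, mul_comm, pow_mul, hr]
  have hmk : ((g * c⁻¹ : G) : G ⧸ D) = g := QuotientGroup.mk_mul_of_mem g hcD
  refine ⟨g * c⁻¹, hmk, Nat.dvd_antisymm (orderOf_dvd_of_pow_eq_one ?_) ?_⟩
  · have hcomm : Commute g c⁻¹ := Subgroup.mem_center_iff.mp (hDZ hcD) g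
    rw [hcomm.mul_pow, inv_pow, hck, mul_inv_cancel]
  · simpa only [QuotientGroup.mk'_apply, hmk] using
      orderOf_map_dvd (QuotientGroup.mk' D) (g * c⁻¹)

def QuotientGroup.mkFiberEquiv (g : G) : {a : G // (a : G ⧸ D) = g} ≃ D where
  toFun a := ⟨g⁻¹ * a, QuotientGroup.eq.mp a.2.symm⟩
  invFun d := ⟨g * d, QuotientGroup.mk_mul_of_mem g d.2⟩
  left_inv a := Subtype.ext (mul_inv_cancel_left g a)
  right_inv d := Subtype.ext (inv_mul_cancel_left g d)

theorem exists_mkFiberEquiv_orderOf_dvd {M : Type*} [Group M] {C : Subgroup M}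
    (σ : D ≃ C) {g : G} {b : M} (h : ∀ d : D, orderOf (g * d) ∣ orderOf (b * σ d)) :
    ∃ e : {a : G // (a : G ⧸ D) = g} ≃ {w : M // (w : M ⧸ C) = b},
      ∀ a, orderOf a.1 ∣ orderOf (e a).1 :=
  ⟨(QuotientGroup.mkFiberEquiv g).trans (σ.trans (QuotientGroup.mkFiberEquiv b).symm),
    fun a => by simpa [QuotientGroup.mkFiberEquiv] using h (QuotientGroup.mkFiberEquiv g a)⟩

end Quotient

theorem Equiv.exists_subtype_equiv_of_fiberwise {α β α' β' : Type*}
    (f : α → α') (g : β → β')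
    {p : α → Prop} {q : β → Prop} {p' : α' → Prop} {q' : β' → Prop}
    (hp : ∀ a, p a ↔ p' (f a)) (hq : ∀ b, q b ↔ q' (g b)) (e : Subtype p' ≃ Subtype q')
    (r : α → β → Prop)
    (h : ∀ z, ∃ φ : {a // f a = z.1} ≃ {b // g b = (e z).1}, ∀ a, r a.1 (φ a).1) :
    ∃ φ : Subtype p ≃ Subtype q, ∀ a, r a.1 (φ a).1 := by
  choose φ hφ using h
  refine ⟨(sigmaSubtypeFiberEquivSubtype f hp).symm.trans
    ((sigmaCongr e φ).trans (sigmaSubtypeFiberEquivSubtype g hq)), fun a => ?_⟩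
  exact hφ _ ⟨a, rfl⟩

section Fiber

variable {G M : Type*} [Group G] [CommGroup M] {p m : ℕ} {D : Subgroup G} [D.Normal]
  {C : Subgroup M}

theorem orderOf_mul_dvd_of_prime_dvd (hp : p.Prime) (hm : m ≠ 0) (hD : ∀ d ∈ D, d ^ p = 1)
    (hC : C = (powMonoidHom (p ^ m)).ker) {g : G} {b : M}
    (hgb : orderOf (g : G ⧸ D) ∣ orderOf (b : M ⧸ C)) (hpb : p ∣ orderOf (b : M ⧸ C))
    (d : D) (c : C) : orderOf (g * d) ∣ orderOf (b * c) := by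
  subst hC
  rw [← QuotientGroup.mk_mul_of_mem b c.2, orderOf_mk_ker_powMonoidHom] at hgb hpb
  calc orderOf (g * d) ∣ orderOf ((g * d : G) : G ⧸ D) * p := orderOf_dvd_orderOf_mk_mul hD _
    _ = orderOf (g : G ⧸ D) * p := by rw [QuotientGroup.mk_mul_of_mem g d.2]
    _ ∣ orderOf ((b * c) ^ p ^ m) * p := mul_dvd_mul_right hgb p
    _ ∣ orderOf (b * c) := orderOf_pow_prime_pow_mul_dvd hp hm hpb

theorem exists_orderOf_mul_dvd_of_not_prime_dvd (hp : p.Prime) (hDZ : D ≤ Subgroup.center G)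
    (hD : ∀ d ∈ D, d ^ p = 1) (hC : C = (powMonoidHom (p ^ m)).ker) (σ : D ≃ C)
    (hσ : σ 1 = 1)
    {z : G ⧸ D} {v : M ⧸ C} (hzv : orderOf z ∣ orderOf v) (hpv : ¬ p ∣ orderOf v) :
    ∃ (g : G) (b : M), (g : G ⧸ D) = z ∧ (b : M ⧸ C) = v ∧
      ∀ d : D, orderOf (g * d) ∣ orderOf (b * σ d) := by
  subst hC
  have hvp : (orderOf v).Coprime p := (hp.coprime_iff_not_dvd.mpr hpv).symm
  obtain ⟨g, rfl, hg⟩ := exists_mk_eq_and_orderOf_eq hDZ hD z (hvp.coprime_dvd_left hzv)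
  obtain ⟨b, rfl, hb⟩ := exists_mk_eq_and_orderOf_eq (by simp [CommGroup.center_eq_top])
    (fun _ => MonoidHom.mem_ker.mp) v (hvp.pow_right m)
  refine ⟨g, b, rfl, rfl, fun d => ?_⟩
  rcases eq_or_ne d 1 with rfl | hd
  · simpa [hσ, hg, hb] using hzv
  have hσd : (σ d : M) ^ p ^ m = 1 := (σ d).2
  have hσd1 : (σ d : M) ≠ 1 := fun h => hd (σ.injective (Subtype.ext h |>.trans hσ.symm))
  have hmul : orderOf (b * σ d) = orderOf b * orderOf (σ d : M) :=
    (Commute.all _ _).orderOf_mul_eq_mul_orderOf_of_coprime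
      (hb ▸ (hvp.pow_right m).coprime_dvd_right (orderOf_dvd_of_pow_eq_one hσd))
  calc orderOf (g * d) ∣ orderOf ((g * d : G) : G ⧸ D) * p := orderOf_dvd_orderOf_mk_mul hD _
    _ = orderOf (g : G ⧸ D) * p := by rw [QuotientGroup.mk_mul_of_mem g d.2]
    _ ∣ orderOf (b : M ⧸ _) * orderOf (σ d : M) :=
      mul_dvd_mul hzv (dvd_orderOf_of_pow_prime_pow_eq_one hp hσd hσd1)
    _ = orderOf (b * σ d) := by rw [hmul, hb]

theorem exists_fiber_equiv_orderOf_dvd (hp : p.Prime) (hm : m ≠ 0)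
    (hDZ : D ≤ Subgroup.center G) (hD : ∀ d ∈ D, d ^ p = 1)
    (hC : C = (powMonoidHom (p ^ m)).ker) (σ : D ≃ C)
    (z : G ⧸ D) (v : M ⧸ C) (hzv : orderOf z ∣ orderOf v) :
    ∃ e : {g : G // (g : G ⧸ D) = z} ≃ {w : M // (w : M ⧸ C) = v},
      ∀ g, orderOf g.1 ∣ orderOf (e g).1 := by
  by_cases hpv : p ∣ orderOf v
  · obtain ⟨g, rfl⟩ := QuotientGroup.mk_surjective z
    obtain ⟨b, rfl⟩ := QuotientGroup.mk_surjective v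
    exact exists_mkFiberEquiv_orderOf_dvd σ
      fun d => orderOf_mul_dvd_of_prime_dvd hp hm hD hC hzv hpv d (σ d)
  · classical
    let σ' := σ.trans (Equiv.swap (σ 1) 1)
    obtain ⟨g, b, rfl, rfl, h⟩ :=
      exists_orderOf_mul_dvd_of_not_prime_dvd hp hDZ hD hC σ' (by simp [σ']) hzv hpv
    exact exists_mkFiberEquiv_orderOf_dvd σ' h

end Fiber

theorem exists_mem_eq_mul_iff_exists_mem_mk_eq {G : Type*} [Group G] {K L : Subgroup G}
    (hLK : L ≤ K) (x y : G) :
    (∃ h ∈ K, y = x * h) ↔ ∃ h ∈ K, (y : G ⧸ L) = ↑(x * h) := by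
  refine ⟨fun ⟨h, hh, e⟩ => ⟨h, hh, e ▸ rfl⟩, fun ⟨h, hh, e⟩ => ?_⟩
  have hl : (x * h)⁻¹ * y ∈ L := QuotientGroup.eq.mp e.symm
  exact ⟨h * ((x * h)⁻¹ * y), mul_mem hh (hLK hl), by group⟩

section Cc

variable {n d : ℕ} [NeZero n]

theorem card_Cc (hd : d ∣ n) : Nat.card (Cc n d) = d := by
  rw [Cc, Nat.card_zpowers, orderOf_ofAdd_eq_addOrderOf, ZMod.addOrderOf_coe _ (NeZero.ne n),
    Nat.gcd_eq_right (Nat.div_dvd_of_dvd hd), Nat.div_div_self hd (NeZero.ne n)]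

theorem Cc_eq_ker_powMonoidHom (hd : d ∣ n) :
    Cc n d = (powMonoidHom d : Multiplicative (ZMod n) →* _).ker := by
  refine Subgroup.eq_of_le_of_card_ge ?_ ?_
  · have hord := card_Cc hd
    rw [Cc, Nat.card_zpowers] at hord
    rw [Cc, Subgroup.zpowers_le, MonoidHom.mem_ker, powMonoidHom_apply]
    simpa only [hord] using pow_orderOf_eq_one (Multiplicative.ofAdd ((n / d : ℕ) : ZMod n))
  · rw [IsCyclic.card_powMonoidHom_ker, card_Cc hd, Nat.card_eq_fintype_card,
      Fintype.card_multiplicative, ZMod.card, Nat.gcd_eq_right hd]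

theorem Cc_le_Cc {e : ℕ} (hde : d ∣ e) (hen : e ∣ n) : Cc n d ≤ Cc n e := by
  rw [Cc_eq_ker_powMonoidHom (hde.trans hen), Cc_eq_ker_powMonoidHom hen]
  obtain ⟨t, rfl⟩ := hde
  intro w hw
  rw [MonoidHom.mem_ker, powMonoidHom_apply] at hw ⊢
  rw [pow_mul, hw, one_pow]

end Cc

theorem Subgroup.normal_of_le_center {G : Type*} [Group G] {K : Subgroup G}
    (hK : K ≤ Subgroup.center G) : K.Normal :=
  ⟨fun a ha g => by rwa [Subgroup.mem_center_iff.mp (hK ha) g, mul_inv_cancel_right]⟩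

section Minimal

variable {G : Type*} [Group G] [Finite G] {D : Subgroup G}

theorem exists_prime_forall_pow_eq_one_of_minimal (hDZ : D ≤ Subgroup.center G)
    (hDmin : D ≠ ⊥ ∧ ∀ K : Subgroup G, K.Normal → K ≤ D → K ≠ ⊥ → K = D) :
    ∃ p, p.Prime ∧ ∀ d ∈ D, d ^ p = 1 := by
  obtain ⟨hD, hmin⟩ := hDmin
  have : Nontrivial D := (Subgroup.nontrivial_iff_ne_bot D).mpr hD
  set p := (Nat.card D).minFac
  have hp : p.Prime := Nat.minFac_prime Finite.one_lt_card.ne'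
  have : Fact p.Prime := ⟨hp⟩
  obtain ⟨d₀, hd₀⟩ := exists_prime_orderOf_dvd_card' p (Nat.minFac_dvd _)
  let K : Subgroup G :=
    { carrier := {g | g ∈ D ∧ g ^ p = 1}
      one_mem' := ⟨D.one_mem, one_pow p⟩
      mul_mem' := fun {a b} ⟨ha, hap⟩ ⟨hb, hbp⟩ => ⟨D.mul_mem ha hb, by
        have hab : Commute a b := Subgroup.mem_center_iff.mp (hDZ hb) a
        rw [hab.mul_pow, hap, hbp, one_mul]⟩
      inv_mem' := fun {a} ⟨ha, hap⟩ => ⟨D.inv_mem ha, by rw [inv_pow, hap, inv_one]⟩ }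
  have hKD : K ≤ D := fun g hg => hg.1
  have hK : K ≠ ⊥ := by
    have hd₀K : (d₀ : G) ∈ K := ⟨d₀.2, by
      rw [← hd₀]; exact congrArg Subtype.val (pow_orderOf_eq_one d₀)⟩
    have hd₀1 : (d₀ : G) ≠ 1 := fun h =>
      hp.ne_one (by rw [← hd₀, OneMemClass.coe_eq_one.mp h, orderOf_one])
    exact Subgroup.ne_bot_iff_exists_ne_one.mpr
      ⟨⟨d₀, hd₀K⟩, fun h => hd₀1 (congrArg Subtype.val h)⟩
  have hKeq := hmin K (Subgroup.normal_of_le_center (hKD.trans hDZ)) hKD hK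
  exact ⟨p, hp, fun d hd => (hKeq ▸ hd : d ∈ K).2⟩

theorem exists_card_eq_prime_pow_of_forall_pow_eq_one {p : ℕ} (hp : p.Prime) (hD : D ≠ ⊥)
    (hDp : ∀ d ∈ D, d ^ p = 1) : ∃ m ≠ 0, Nat.card D = p ^ m := by
  have : Fact p.Prime := ⟨hp⟩
  obtain ⟨m, hm⟩ := IsPGroup.exists_card_eq (p := p) (G := D)
    fun d => ⟨1, Subtype.ext (by simpa using hDp d d.2)⟩
  refine ⟨m, fun hm0 => hD (D.eq_bot_of_card_eq ?_), hm⟩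
  rw [hm, hm0, pow_zero]

end Minimal

theorem stmt4_general {G : Type*} [Group G] [Fintype G] (n : ℕ) (hn : n = Fintype.card G)
    (N D : Subgroup G) [N.Normal] [D.Normal]
    (hDZ : D ≤ Subgroup.center G) (hDN : D ≤ N)
    (hDmin : D ≠ ⊥ ∧ ∀ K : Subgroup G, K.Normal → K ≤ D → K ≠ ⊥ → K = D)
    (x : G) (u : Multiplicative (ZMod n))
    (fbar : {y : G ⧸ D // ∃ h ∈ N, y = QuotientGroup.mk (x * h)} ≃
      {v : Multiplicative (ZMod n) ⧸ Cc n (Nat.card D) //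
        ∃ w ∈ Cc n (Nat.card N), v = QuotientGroup.mk (u * w)})
    (hfbar : ∀ y, orderOf (y : {y : G ⧸ D // ∃ h ∈ N, y = QuotientGroup.mk (x * h)}).1 ∣
      orderOf (fbar y).1) :
    ∃ f : {y : G // ∃ h ∈ N, y = x * h} ≃
        {v : Multiplicative (ZMod n) // ∃ w ∈ Cc n (Nat.card N), v = u * w},
      ∀ y, orderOf (y : {y : G // ∃ h ∈ N, y = x * h}).1 ∣ orderOf (f y).1 := by
  have : NeZero n := ⟨hn ▸ Fintype.card_ne_zero⟩
  obtain ⟨p, hp, hDp⟩ := exists_prime_forall_pow_eq_one_of_minimal hDZ hDmin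
  obtain ⟨m, hm, hDcard⟩ := exists_card_eq_prime_pow_of_forall_pow_eq_one hp hDmin.1 hDp
  have hNn : Nat.card N ∣ n :=
    hn ▸ Nat.card_eq_fintype_card (α := G) ▸ N.card_subgroup_dvd_card
  have hDN' : Nat.card D ∣ Nat.card N := Subgroup.card_dvd_of_le hDN
  have hC : Cc n (Nat.card D) = (powMonoidHom (p ^ m)).ker :=
    hDcard ▸ Cc_eq_ker_powMonoidHom (hDN'.trans hNn)
  obtain ⟨σ⟩ : Nonempty (D ≃ Cc n (Nat.card D)) :=
    Finite.card_eq.mp (card_Cc (hDN'.trans hNn)).symm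
  exact Equiv.exists_subtype_equiv_of_fiberwise ((↑) : G → G ⧸ D)
    ((↑) : Multiplicative (ZMod n) → Multiplicative (ZMod n) ⧸ Cc n (Nat.card D))
    (exists_mem_eq_mul_iff_exists_mem_mk_eq hDN x)
    (exists_mem_eq_mul_iff_exists_mem_mk_eq (Cc_le_Cc hDN' hNn) u)
    fbar (fun a b => orderOf a ∣ orderOf b)
    fun z => exists_fiber_equiv_orderOf_dvd hp hm hDZ hDp hC σ z.1 (fbar z).1 (hfbar z)

/-- Lifting lemma: let `G` have order `n`, `N ⊴ G`, and `D` a central minimal normal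
subgroup of `G` with `D ≤ N`. Let `x ∈ G`, `u ∈ C_n` with `o(xN) = o(u C_{n,|N|})`.
If there is a bijection `f̄ : xN/D → (u C_{n,|N|})/C_{n,|D|}` with
`o(xhD) ∣ o(f̄(xhD))` for all `h ∈ N`, then there is a bijection `f : xN → u C_{n,|N|}`
with `o(xh) ∣ o(f(xh))` for all `h ∈ N`. -/
theorem stmt4 {G : Type*} [Group G] [Fintype G] (n : ℕ) (hn : n = Fintype.card G)
    (N D : Subgroup G) [N.Normal] [D.Normal]
    (hDZ : D ≤ Subgroup.center G) (hDN : D ≤ N)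
    (hDmin : D ≠ ⊥ ∧ ∀ K : Subgroup G, K.Normal → K ≤ D → K ≠ ⊥ → K = D)
    (x : G) (u : Multiplicative (ZMod n))
    (horder : orderOf (QuotientGroup.mk x : G ⧸ N)
      = orderOf (QuotientGroup.mk u : Multiplicative (ZMod n) ⧸ Cc n (Nat.card N)))
    (fbar : {y : G ⧸ D // ∃ h ∈ N, y = QuotientGroup.mk (x * h)} ≃
      {v : Multiplicative (ZMod n) ⧸ Cc n (Nat.card D) //
        ∃ w ∈ Cc n (Nat.card N), v = QuotientGroup.mk (u * w)})
    (hfbar : ∀ y, orderOf (y : {y : G ⧸ D // ∃ h ∈ N, y = QuotientGroup.mk (x * h)}).1 ∣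
      orderOf (fbar y).1) :
    ∃ f : {y : G // ∃ h ∈ N, y = x * h} ≃
        {v : Multiplicative (ZMod n) // ∃ w ∈ Cc n (Nat.card N), v = u * w},
      ∀ y, orderOf (y : {y : G // ∃ h ∈ N, y = x * h}).1 ∣ orderOf (f y).1 :=
  stmt4_general n hn N D hDZ hDN hDmin x u fbar hfbar
end

section
/- For every finite solvable group H of order m there exists a bijection β : H → C_m such that o(x) divides o(β(x)) for all x ∈ H. In particular, for any finite group L, since (C_{|L|})^r is abelian (hence solvable), there exists a bijection from (C_{|L|})^r onto C_{|L|^r} with o(x) | o(β(x)) for all x. -/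
/-!
Induction on `|G|`. A solvable `G ≠ 1` has a nontrivial abelian normal subgroup `A` (the last
nontrivial term of its derived series); for a prime `p ∣ |A|` the `p`-torsion `N` of `A` is normal,
of order `q = p ^ k > 1` and of exponent `p`. Induction gives `β' : G/N → C_{m/q}`, and `β` is
assembled fibrewise over the reduction `C_m → C_{m/q}`, whose kernel also has order `q`.
Fix a coset `xN` with image `y`, so `o(xN) ∣ s = o(y)`; all elements of `xN` have order dividing
`o(xN) · p`. If `p ∣ s`, every lift of `y` to the cyclic group `C_m` has order divisible by `s · p`,
so any bijection of the two fibres works. If `p ∤ s`, exactly one lift of `y` has order `s` and the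
others have order divisible by `s · p`; it is matched with an element of `xN` of order `o(xN)`,
which is a suitable power of any element of the coset.
-/

open Subgroup

section Solvable

variable {G : Type*} [Group G]

theorem Group.IsSolvable.exists_normal_ne_bot_commutator_eq_bot [Group.IsSolvable G]
    [Nontrivial G] : ∃ A : Subgroup G, A.Normal ∧ A ≠ ⊥ ∧ ⁅A, A⁆ = ⊥ := by
  classical
  have hex : ∃ n, derivedSeries G n = ⊥ := Group.IsSolvable.solvable
  have hn : Nat.find hex ≠ 0 := fun h =>
    top_ne_bot (α := Subgroup G) (by simpa [h] using Nat.find_spec hex)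
  obtain ⟨k, hk⟩ := Nat.exists_eq_add_one_of_ne_zero hn
  refine ⟨derivedSeries G k, derivedSeries_normal G k, Nat.find_min hex (by omega), ?_⟩
  rw [← derivedSeries_succ, ← hk]
  exact Nat.find_spec hex

def Subgroup.powEqOneOfCommutatorEqBot (A : Subgroup G) (hA : ⁅A, A⁆ = ⊥) (n : ℕ) :
    Subgroup G where
  carrier := {x | x ∈ A ∧ x ^ n = 1}
  one_mem' := ⟨A.one_mem, one_pow n⟩
  mul_mem' := by
    rintro x y ⟨hxA, hx⟩ ⟨hyA, hy⟩
    have hxy : Commute x y :=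
      mem_centralizer_iff.mp (commutator_eq_bot_iff_le_centralizer.mp hA hyA) x hxA
    exact ⟨A.mul_mem hxA hyA, by rw [hxy.mul_pow, hx, hy, one_mul]⟩
  inv_mem' := by
    rintro x ⟨hxA, hx⟩
    exact ⟨A.inv_mem hxA, by rw [inv_pow, hx, inv_one]⟩

theorem Subgroup.normal_powEqOneOfCommutatorEqBot (A : Subgroup G) [A.Normal]
    (hA : ⁅A, A⁆ = ⊥) (n : ℕ) : (A.powEqOneOfCommutatorEqBot hA n).Normal where
  conj_mem x := by
    rintro ⟨hxA, hx⟩ g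
    exact ⟨Normal.conj_mem ‹_› x hxA g, by rw [conj_pow, hx, mul_one, mul_inv_cancel]⟩

theorem Group.IsSolvable.exists_normal_dvd_card_forall_pow_eq_one [Finite G] [Group.IsSolvable G]
    [Nontrivial G] :
    ∃ p, p.Prime ∧ ∃ N : Subgroup G, N.Normal ∧ p ∣ Nat.card N ∧ ∀ x ∈ N, x ^ p = 1 := by
  obtain ⟨A, hAn, hA, hAA⟩ := exists_normal_ne_bot_commutator_eq_bot (G := G)
  set p := (Nat.card A).minFac
  have hp : p.Prime := Nat.minFac_prime ((one_lt_card_iff_ne_bot A).mpr hA).ne'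
  have : Fact p.Prime := ⟨hp⟩
  obtain ⟨a, ha⟩ := exists_prime_orderOf_dvd_card' p (Nat.minFac_dvd (Nat.card A))
  have haN : (a : G) ∈ A.powEqOneOfCommutatorEqBot hAA p :=
    ⟨a.2, by simpa [ha] using congrArg Subtype.val (pow_orderOf_eq_one a)⟩
  refine ⟨p, hp, _, A.normal_powEqOneOfCommutatorEqBot hAA p, ?_, fun x hx => hx.2⟩
  simpa [ha] using Subgroup.orderOf_dvd_natCard _ haN

end Solvable

theorem Equiv.exists_forall_of_forall_ne {X Y : Type*} (e : X ≃ Y) {P : X → Y → Prop} {x₀ : X}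
    {y₀ : Y} (h₀ : P x₀ y₀) (h : ∀ x, ∀ y ≠ y₀, P x y) : ∃ f : X ≃ Y, ∀ x, P x (f x) := by
  classical
  refine ⟨e.trans (Equiv.swap (e x₀) y₀), fun x => ?_⟩
  by_cases hx : x = x₀
  · simpa [hx] using h₀
  · refine h x _ fun hy => hx (e.injective ?_)
    simpa using congrArg (Equiv.swap (e x₀) y₀) hy

theorem IsPGroup.coprime_natCard_of_not_dvd {G : Type*} [Group G] [Finite G] {p n : ℕ}
    (hp : p.Prime) (hG : IsPGroup p G) (hn : ¬p ∣ n) : n.Coprime (Nat.card G) := by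
  have : Fact p.Prime := ⟨hp⟩
  obtain ⟨k, hk⟩ := hG.exists_card_eq
  rw [hk]
  exact Nat.Coprime.pow_right k ((hp.coprime_iff_not_dvd.mpr hn).symm)

section OrderOfMap

variable {M B : Type*} [Group M] [Group B]

theorem orderOf_dvd_orderOf_map_mul (φ : M →* B) {n : ℕ} (hn : ∀ x ∈ φ.ker, x ^ n = 1) (z : M) :
    orderOf z ∣ orderOf (φ z) * n := by
  rw [orderOf_dvd_iff_pow_eq_one, pow_mul]
  exact hn _ (by rw [MonoidHom.mem_ker, map_pow, pow_orderOf_eq_one])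

theorem orderOf_dvd_orderOf_map_mul_card_ker [Finite M] (φ : M →* B) (z : M) :
    orderOf z ∣ orderOf (φ z) * Nat.card φ.ker :=
  orderOf_dvd_orderOf_map_mul φ
    (fun _ hx => orderOf_dvd_iff_pow_eq_one.mp (orderOf_dvd_natCard _ hx)) z

theorem exists_map_eq_orderOf_eq [Finite M] (φ : M →* B) (z : M)
    (hcop : (orderOf (φ z)).Coprime (Nat.card φ.ker)) :
    ∃ z₀, φ z₀ = φ z ∧ orderOf z₀ = orderOf (φ z) := by
  set s := orderOf (φ z)
  have hs : 0 < s := Nat.pos_of_dvd_of_pos (orderOf_map_dvd φ z) (orderOf_pos z)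
  obtain ⟨u, hu⟩ := orderOf_map_dvd φ z
  have hsu : s.Coprime u := by
    refine hcop.coprime_dvd_right ?_
    have := orderOf_dvd_orderOf_map_mul_card_ker φ z
    rwa [hu, Nat.mul_dvd_mul_iff_left hs] at this
  -- `z ^ c` with `c ≡ 1 [MOD s]` and `u ∣ c` kills the part of the order of `z` coprime to `s`
  obtain ⟨c, hc₁, hc₀⟩ := Nat.chineseRemainder hsu 1 0
  have huc : u ∣ c := (Nat.modEq_zero_iff_dvd).mp hc₀
  refine ⟨z ^ c, ?_, ?_⟩
  · rw [map_pow, ← pow_one (φ z), ← pow_mul, one_mul, pow_eq_pow_iff_modEq]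
    exact hc₁
  · have hsc : s.Coprime c := by
      simpa [Nat.Coprime, Nat.gcd_comm] using Nat.ModEq.gcd_eq hc₁
    rw [orderOf_pow, hu, Nat.Coprime.gcd_mul_left_cancel u hsc, Nat.gcd_eq_left huc,
      Nat.mul_div_cancel _ (Nat.pos_of_mul_pos_left (hu ▸ orderOf_pos z))]

theorem orderOf_eq_or_mul_dvd_orderOf [Finite M] {p : ℕ} (hp : p.Prime) (φ : M →* B)
    (hφ : IsPGroup p φ.ker) (z : M) :
    orderOf z = orderOf (φ z) ∨ orderOf (φ z) * p ∣ orderOf z := by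
  have : Fact p.Prime := ⟨hp⟩
  obtain ⟨k, hk⟩ := hφ.exists_card_eq
  obtain ⟨u, hu⟩ := orderOf_map_dvd φ z
  have hs : 0 < orderOf (φ z) := Nat.pos_of_dvd_of_pos (orderOf_map_dvd φ z) (orderOf_pos z)
  have hup : u ∣ p ^ k := by
    have := orderOf_dvd_orderOf_map_mul_card_ker φ z
    rwa [hu, hk, Nat.mul_dvd_mul_iff_left hs] at this
  obtain ⟨_ | j, -, rfl⟩ := (Nat.dvd_prime_pow hp).mp hup
  · left; simpa using hu
  · right; rw [hu, pow_succ']; exact Nat.mul_dvd_mul_left _ (dvd_mul_right p _)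

end OrderOfMap

theorem eq_of_map_eq_of_orderOf_eq {C B : Type*} [CommGroup C] [Group B] (ψ : C →* B) {z z' : C}
    (h : ψ z = ψ z') (hord : orderOf z = orderOf z')
    (hcop : (orderOf z).Coprime (Nat.card ψ.ker)) : z = z' := by
  have hmem : z * z'⁻¹ ∈ ψ.ker := by simp [MonoidHom.mem_ker, h]
  have hdvd : orderOf (z * z'⁻¹) ∣ orderOf z := by
    simpa [hord] using (Commute.all z z'⁻¹).orderOf_mul_dvd_lcm
  have := Nat.eq_one_of_dvd_coprimes hcop hdvd (Subgroup.orderOf_dvd_natCard _ hmem)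
  rwa [orderOf_eq_one_iff, mul_inv_eq_one] at this

theorem exists_map_eq_orderOf_eq_forall_ne {C B : Type*} [CommGroup C] [Finite C] [Group B]
    {p : ℕ} (hp : p.Prime) (ψ : C →* B) (hψ : IsPGroup p ψ.ker) (z₁ : C)
    (hpz : ¬p ∣ orderOf (ψ z₁)) :
    ∃ z₀, ψ z₀ = ψ z₁ ∧ orderOf z₀ = orderOf (ψ z₁) ∧
      ∀ z, ψ z = ψ z₁ → z ≠ z₀ → orderOf (ψ z₁) * p ∣ orderOf z := by
  have hcop := hψ.coprime_natCard_of_not_dvd hp hpz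
  obtain ⟨z₀, hz₀, hz₀o⟩ := exists_map_eq_orderOf_eq ψ z₁ hcop
  refine ⟨z₀, hz₀, hz₀o, fun z hz hne => ?_⟩
  rw [← hz]
  refine (orderOf_eq_or_mul_dvd_orderOf hp ψ hψ z).resolve_left fun hzo => hne ?_
  rw [hz] at hzo
  exact eq_of_map_eq_of_orderOf_eq ψ (hz.trans hz₀.symm) (hzo.trans hz₀o.symm) (hzo ▸ hcop)

theorem MonoidHom.natCard_fiber {M B : Type*} [Group M] [Group B] (φ : M →* B)
    (hφ : Function.Surjective φ) (b : B) : Nat.card {x // φ x = b} = Nat.card φ.ker :=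
  Nat.card_congr (φ.fiberEquivKerOfSurjective hφ b)

theorem IsCyclic.mem_of_orderOf_dvd_card {C : Type*} [CommGroup C] [IsCyclic C] [Finite C]
    (K : Subgroup C) {x : C} (hx : orderOf x ∣ Nat.card K) : x ∈ K := by
  have hle : K ≤ (powMonoidHom (Nat.card K) : C →* C).ker := fun _ hy =>
    orderOf_dvd_iff_pow_eq_one.mp (K.orderOf_dvd_natCard hy)
  have hcard : Nat.card (powMonoidHom (Nat.card K) : C →* C).ker = Nat.card K := by
    rw [IsCyclic.card_powMonoidHom_ker, Nat.gcd_eq_right K.card_subgroup_dvd_card]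
  rw [Subgroup.eq_of_le_of_card_ge hle hcard.le]
  simpa [orderOf_dvd_iff_pow_eq_one] using hx

theorem IsCyclic.mul_dvd_orderOf_of_dvd_orderOf_map {C B : Type*} [CommGroup C] [IsCyclic C]
    [Finite C] [Group B] {p : ℕ} (hp : p.Prime) (ψ : C →* B) (hψ : IsPGroup p ψ.ker)
    (hpψ : p ∣ Nat.card ψ.ker) {z : C} (hpz : p ∣ orderOf (ψ z)) :
    orderOf (ψ z) * p ∣ orderOf z := by
  refine (orderOf_eq_or_mul_dvd_orderOf hp ψ hψ z).resolve_left fun hz => ?_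
  have hs : 0 < orderOf (ψ z) := hz ▸ orderOf_pos z
  have hmem : z ^ (orderOf z / p) ∈ ψ.ker := IsCyclic.mem_of_orderOf_dvd_card _ <| by
    rwa [orderOf_pow_orderOf_div (orderOf_pos z).ne' (hz ▸ hpz)]
  rw [MonoidHom.mem_ker, map_pow, hz] at hmem
  exact pow_ne_one_of_lt_orderOf (Nat.div_pos (Nat.le_of_dvd hs hpz) hp.pos).ne'
    (Nat.div_lt_self hs hp.one_lt) hmem

section Lifting

variable {G C C' : Type*} [Group G] [Finite G] [CommGroup C] [IsCyclic C] [Finite C] [Group C']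
  {N : Subgroup G} [N.Normal] {p : ℕ} {ψ : C →* C'} {β : G ⧸ N ≃ C'}

theorem exists_fiber_equiv_orderOf_dvd_s7 (hp : p.Prime) (hN : ∀ x ∈ N, x ^ p = 1)
    (hpN : p ∣ Nat.card N) (hψ : Function.Surjective ψ) (hψN : Nat.card ψ.ker = Nat.card N)
    (hβ : ∀ x, orderOf x ∣ orderOf (β x)) (c : C') :
    ∃ e : {x : G // β x = c} ≃ {z : C // ψ z = c}, ∀ x, orderOf x.1 ∣ orderOf (e x).1 := by
  obtain ⟨q, rfl⟩ := β.surjective c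
  obtain ⟨x₁, rfl⟩ := QuotientGroup.mk_surjective q
  obtain ⟨z₁, hz₁⟩ := hψ (β x₁)
  have hNp : IsPGroup p N := fun x => ⟨1, Subtype.ext (by simpa using hN x x.2)⟩
  have hψp : IsPGroup p ψ.ker := by
    obtain ⟨k, hk⟩ := have : Fact p.Prime := ⟨hp⟩; hNp.exists_card_eq
    exact IsPGroup.of_card (hψN.trans hk)
  have hfib : ∀ x : {x : G // β x = β x₁}, orderOf x.1 ∣ orderOf (β x₁) * p := fun x => by
    have hx : (x.1 : G ⧸ N) = x₁ := β.injective x.2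
    have := orderOf_dvd_orderOf_map_mul (QuotientGroup.mk' N) (by simpa using hN) x.1
    exact this.trans (by simpa [hx] using Nat.mul_dvd_mul_right (hβ x₁) p)
  have hcard : Nat.card {x : G // β x = β x₁} = Nat.card {z : C // ψ z = β x₁} :=
    calc Nat.card {x : G // β x = β x₁}
        _ = Nat.card {x : G // QuotientGroup.mk' N x = x₁} :=
          Nat.card_congr (Equiv.subtypeEquivRight fun x => β.injective.eq_iff)
        _ = Nat.card N := by
          rw [MonoidHom.natCard_fiber _ (QuotientGroup.mk'_surjective N), QuotientGroup.ker_mk']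
        _ = Nat.card {z : C // ψ z = β x₁} := by rw [MonoidHom.natCard_fiber _ hψ, hψN]
  obtain ⟨e⟩ := Finite.card_eq.mp hcard
  by_cases hpc : p ∣ orderOf (β x₁)
  · refine ⟨e, fun x => (hfib x).trans ?_⟩
    have hz := IsCyclic.mul_dvd_orderOf_of_dvd_orderOf_map hp ψ hψp (hψN ▸ hpN)
      (z := (e x).1) (by rwa [(e x).2])
    rwa [(e x).2] at hz
  obtain ⟨z₀, hz₀, hz₀o, hz⟩ := exists_map_eq_orderOf_eq_forall_ne hp ψ hψp z₁ (by rwa [hz₁])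
  rw [hz₁] at hz₀ hz₀o hz
  obtain ⟨x₀, hx₀, hx₀o⟩ := exists_map_eq_orderOf_eq (QuotientGroup.mk' N) x₁
    ((QuotientGroup.ker_mk' N).symm ▸
      hNp.coprime_natCard_of_not_dvd hp fun h => hpc (h.trans (hβ _)))
  refine e.exists_forall_of_forall_ne (P := fun x z => orderOf x.1 ∣ orderOf z.1)
    (x₀ := ⟨x₀, congrArg β hx₀⟩) (y₀ := ⟨z₀, hz₀⟩) ?_ fun x z hne => ?_
  · simpa [hx₀o, hz₀o] using hβ x₁
  · exact (hfib x).trans (hz z.1 z.2 fun h => hne (Subtype.ext h))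

theorem exists_equiv_orderOf_dvd_of_quotient (hp : p.Prime) (hN : ∀ x ∈ N, x ^ p = 1)
    (hpN : p ∣ Nat.card N) (hψ : Function.Surjective ψ) (hψN : Nat.card ψ.ker = Nat.card N)
    (hβ : ∀ x, orderOf x ∣ orderOf (β x)) :
    ∃ β : G ≃ C, ∀ x, orderOf x ∣ orderOf (β x) := by
  choose e he using exists_fiber_equiv_orderOf_dvd_s7 hp hN hpN hψ hψN hβ
  exact ⟨Equiv.ofFiberEquiv e, fun x => he _ ⟨x, rfl⟩⟩

end Lifting

theorem ZMod.exists_surjective_natCard_ker {m n : ℕ} [NeZero m] (h : n ∣ m) :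
    ∃ ψ : Multiplicative (ZMod m) →* Multiplicative (ZMod n),
      Function.Surjective ψ ∧ Nat.card ψ.ker * n = m := by
  set ψ := AddMonoidHom.toMultiplicative (ZMod.castHom h (ZMod n)).toAddMonoidHom
  have hψ : Function.Surjective ψ := ZMod.castHom_surjective h
  refine ⟨ψ, hψ, ?_⟩
  have := ψ.ker.card_mul_index
  rwa [Subgroup.index_ker, MonoidHom.range_eq_top.mpr hψ, Subgroup.card_top,
    Nat.card_congr Multiplicative.toAdd, Nat.card_congr Multiplicative.toAdd, Nat.card_zmod,
    Nat.card_zmod] at this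

theorem exists_equiv_zmod_natCard_orderOf_dvd (G : Type*) [Group G] [Finite G]
    [Group.IsSolvable G] :
    ∃ β : G ≃ Multiplicative (ZMod (Nat.card G)), ∀ x, orderOf x ∣ orderOf (β x) := by
  induction hm : Nat.card G using Nat.strong_induction_on generalizing G with
  | _ m ih =>
  have : NeZero m := ⟨hm ▸ Nat.card_pos.ne'⟩
  rcases subsingleton_or_nontrivial G with _ | _
  · obtain ⟨e⟩ : Nonempty (G ≃ Multiplicative (ZMod m)) := Finite.card_eq.mp <| by
      rw [hm, Nat.card_congr Multiplicative.toAdd, Nat.card_zmod]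
    exact ⟨e, fun x => by simp [Subsingleton.elim x 1]⟩
  obtain ⟨p, hp, N, _, hpN, hN⟩ :=
    Group.IsSolvable.exists_normal_dvd_card_forall_pow_eq_one (G := G)
  have hm' : m = Nat.card (G ⧸ N) * Nat.card N := hm ▸ card_eq_card_quotient_mul_card_subgroup N
  have hlt : Nat.card (G ⧸ N) < m := hm' ▸ lt_mul_of_one_lt_right Nat.card_pos
    (hp.one_lt.trans_le (Nat.le_of_dvd Nat.card_pos hpN))
  obtain ⟨β, hβ⟩ := ih _ hlt (G ⧸ N) rfl
  obtain ⟨ψ, hψ, hψN⟩ := ZMod.exists_surjective_natCard_ker ⟨Nat.card N, hm'⟩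
  have hψN' : Nat.card ψ.ker = Nat.card N :=
    Nat.eq_of_mul_eq_mul_right Nat.card_pos (hψN.trans (hm'.trans (mul_comm _ _)))
  exact exists_equiv_orderOf_dvd_of_quotient hp hN hpN hψ hψN' hβ

theorem exists_equiv_orderOf_dvd_of_isMulTorsionFree {A B : Type*} [Group A] [Group B]
    [IsMulTorsionFree B] (e : A ≃ B) : ∃ β : A ≃ B, ∀ x, orderOf x ∣ orderOf (β x) :=
  e.exists_forall_of_forall_ne (P := fun x y => orderOf x ∣ orderOf y) (x₀ := 1) (y₀ := 1)
    (by simp) fun _ y hy => by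
      simp [orderOf_eq_zero_iff.mpr (not_isOfFinOrder_of_isMulTorsionFree hy)]

/-- Ladisch's theorem: every finite solvable group `H` of order `m` admits a bijection
`β : H → C_m` with `o(x) ∣ o(β(x))`; in particular, for any `d, r`, the abelian group
`(C_d)^r` admits such a bijection onto `C_{d^r}`. -/
theorem stmt7 :
    (∀ (H : Type) [Group H] [Fintype H], IsSolvable H →
      ∃ β : H ≃ Multiplicative (ZMod (Nat.card H)),
        ∀ x : H, orderOf x ∣ orderOf (β x)) ∧
    (∀ d r : ℕ,
      ∃ β : (Fin r → Multiplicative (ZMod d)) ≃ Multiplicative (ZMod (d ^ r)),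
        ∀ a : Fin r → Multiplicative (ZMod d), orderOf a ∣ orderOf (β a)) := by
  refine ⟨fun H _ _ hH => @exists_equiv_zmod_natCard_orderOf_dvd H _ _ hH, fun d r => ?_⟩
  have hcard : Nat.card (Fin r → Multiplicative (ZMod d)) = d ^ r := by
    simp [Nat.card_pi, Nat.card_congr Multiplicative.toAdd]
  rw [← hcard]
  rcases finite_or_infinite (Fin r → Multiplicative (ZMod d)) with _ | _
  · exact exists_equiv_zmod_natCard_orderOf_dvd _
  -- `(C_d)^r` is infinite only for `d = 0 < r`; then `ZMod 0 = ℤ`, and both sides are countably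
  -- infinite with `ℤ` torsion-free
  obtain rfl : d = 0 := by
    by_contra hd
    have : NeZero d := ⟨hd⟩
    exact not_finite (Fin r → Multiplicative (ZMod d))
  have : Countable (Multiplicative (ZMod 0)) := inferInstanceAs (Countable ℤ)
  rw [Nat.card_eq_zero_of_infinite]
  exact exists_equiv_orderOf_dvd_of_isMulTorsionFree nonempty_equiv_of_countable.some
end

section
/- Let G be a finite group of order n and suppose that for every normal subgroup N of G and every x ∈ G, u ∈ C_n with o(xN) = o(u·C_{n,|N|}), there is a bijection from xN onto u·C_{n,|N|} preserving divisibility of orders coset-element-wise, and additionally there is a bijection θ : G/N → C_n/C_{n,|N|} with o(xN) | o(θ(xN)). Then there exists a bijection f : G → C_n with o(x) | o(f(x)) for all x ∈ G. -/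
theorem exists_equiv_forall_of_fiberwise {α β ι κ : Type*} (p : α → ι) (q : β → κ) (θ : ι ≃ κ)
    {R : α → β → Prop} (h : ∀ i, ∃ e : {a // p a = i} ≃ {b // q b = θ i}, ∀ a, R a.1 (e a).1) :
    ∃ f : α ≃ β, ∀ a, R a (f a) := by
  choose e he using h
  exact ⟨(Equiv.sigmaFiberEquiv p).symm.trans
    ((Equiv.sigmaCongr (β₂ := fun j => {b // q b = j}) θ e).trans (Equiv.sigmaFiberEquiv q)),
    fun a => he (p a) ⟨a, rfl⟩⟩

theorem QuotientGroup.exists_mem_eq_mul_iff {M : Type*} [Group M] (H : Subgroup M) {u v : M} :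
    (∃ w ∈ H, v = u * w) ↔ (v : M ⧸ H) = u := by
  rw [eq_comm, QuotientGroup.eq]
  exact ⟨by rintro ⟨w, hw, rfl⟩; simpa using hw, fun h => ⟨u⁻¹ * v, h, by group⟩⟩

def QuotientGroup.outCosetEquivFiber {M : Type*} [Group M] (H : Subgroup M) (A : M ⧸ H) :
    {v // ∃ w ∈ H, v = A.out * w} ≃ {v : M // (v : M ⧸ H) = A} :=
  Equiv.subtypeEquivRight fun v => by
    rw [QuotientGroup.exists_mem_eq_mul_iff, QuotientGroup.out_eq']

open scoped Nat

theorem Int.natCast_dvd_one_sub_pow_totient {d n r : ℕ} (hdn : d ∣ n) (hdr : d.Coprime r) :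
    (d : ℤ) ∣ 1 - (r : ℤ) ^ φ n := by
  obtain ⟨c, hc⟩ := Nat.totient_dvd_of_dvd hdn
  have h : r ^ φ n ≡ 1 [MOD d] := by
    simpa [hc, pow_mul] using (Nat.ModEq.pow_totient hdr.symm).pow c
  exact_mod_cast Nat.modEq_iff_dvd.1 h

/-- `r ^ φ n ≡ 1` modulo every divisor of `n` coprime to `r = k / gcd(k, b)` (Euler), so the
shift vanishes there, while it stays `≡ b - a (mod k)`. -/
def cosetShift (n k : ℕ) (a b : ℤ) : ℤ :=
  (b - a) * (1 - ((k / Int.gcd k b : ℕ) : ℤ) ^ φ n)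

section cosetShift

variable {n k : ℕ} {a b : ℤ}

theorem natCast_dvd_cosetShift_sub (hn : n ≠ 0) (hba : (Int.gcd k b : ℤ) ∣ a) :
    (k : ℤ) ∣ cosetShift n k a b - (b - a) := by
  set g := Int.gcd k b
  have hgba : (g : ℤ) ∣ b - a := dvd_sub (Int.gcd_dvd_right _ _) hba
  have hr : ((k / g : ℕ) : ℤ) ∣ ((k / g : ℕ) : ℤ) ^ φ n :=
    dvd_pow_self _ (Nat.totient_pos.2 (Nat.pos_of_ne_zero hn)).ne'
  have h := mul_dvd_mul hgba hr
  rw [← Nat.cast_mul,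
    Nat.mul_div_cancel' (Int.natCast_dvd_natCast.1 (Int.gcd_dvd_left _ _))] at h
  exact (dvd_neg.2 h).trans (dvd_of_eq (by rw [cosetShift]; ring))

theorem prime_pow_dvd_of_dvd_add_cosetShift (hn : n ≠ 0) (hk : k ≠ 0)
    (hba : (Int.gcd k b : ℤ) ∣ a) {x : ℤ} (hx : (k : ℤ) ∣ x - a) {p j : ℕ} (hp : p.Prime)
    (hpn : p ^ j ∣ n) (hy : ((p ^ j : ℕ) : ℤ) ∣ x + cosetShift n k a b) :
    ((p ^ j : ℕ) : ℤ) ∣ x := by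
  set g := Int.gcd k b
  have hkgr : g * (k / g) = k :=
    Nat.mul_div_cancel' (Int.natCast_dvd_natCast.1 (Int.gcd_dvd_left _ _))
  have hyb : (k : ℤ) ∣ x + cosetShift n k a b - b :=
    (dvd_add hx (natCast_dvd_cosetShift_sub hn hba)).trans (dvd_of_eq (by ring))
  have hdvd_g : ∀ i, p ^ i ∣ k → ((p ^ i : ℕ) : ℤ) ∣ x + cosetShift n k a b → p ^ i ∣ g := by
    intro i hik hi
    have hik : ((p ^ i : ℕ) : ℤ) ∣ k := Int.natCast_dvd_natCast.2 hik
    exact Int.dvd_gcd hik (by simpa using dvd_sub hi (hik.trans hyb))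
  by_cases hjk : p ^ j ∣ k
  · have hg : ((p ^ j : ℕ) : ℤ) ∣ g := Int.natCast_dvd_natCast.2 (hdvd_g j hjk hy)
    simpa using dvd_add ((Int.natCast_dvd_natCast.2 hjk).trans hx) (hg.trans hba)
  · -- `p` cannot divide `k / g`: the full `p`-part of `k` already divides `g`
    have hpr : ¬ p ∣ k / g := by
      intro hpr
      have hij : k.factorization p < j := by
        by_contra h
        exact hjk ((pow_dvd_pow p (not_lt.1 h)).trans (Nat.ordProj_dvd k p))
      have hg := hdvd_g _ (Nat.ordProj_dvd k p)
        ((Int.natCast_dvd_natCast.2 (pow_dvd_pow p hij.le)).trans hy)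
      have h := mul_dvd_mul hg hpr
      rw [← pow_succ, hkgr] at h
      exact Nat.pow_succ_factorization_not_dvd hk hp h
    have hcop : (p ^ j).Coprime (k / g) :=
      Nat.Coprime.pow_left j ((Nat.Prime.coprime_iff_not_dvd hp).2 hpr)
    have ht : ((p ^ j : ℕ) : ℤ) ∣ cosetShift n k a b :=
      (Int.natCast_dvd_one_sub_pow_totient hpn hcop).mul_left _
    simpa using dvd_sub hy ht

theorem gcd_add_cosetShift_dvd (hn : n ≠ 0) (hk : k ≠ 0) (hba : (Int.gcd k b : ℤ) ∣ a)
    {x : ℤ} (hx : (k : ℤ) ∣ x - a) : (Int.gcd n (x + cosetShift n k a b) : ℤ) ∣ x := by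
  rw [Int.natCast_dvd, Nat.dvd_iff_prime_pow_dvd_dvd]
  intro p j hp hpj
  rw [← Int.natCast_dvd]
  refine prime_pow_dvd_of_dvd_add_cosetShift hn hk hba hx hp ?_ ?_
  · exact hpj.trans (by simpa using Int.gcd_dvd_natAbs_left (n : ℤ) _)
  · exact (Int.natCast_dvd_natCast.2 hpj).trans (Int.gcd_dvd_right _ _)

end cosetShift

open Multiplicative Subgroup

section ZModCoset

variable {n k : ℕ}

theorem ofAdd_intCast_mem_zpowers_iff (x y : ℤ) :
    ofAdd (x : ZMod n) ∈ zpowers (ofAdd (y : ZMod n)) ↔ (Int.gcd n y : ℤ) ∣ x := by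
  simp only [mem_zpowers_iff, ← ofAdd_zsmul, ofAdd.injective.eq_iff, zsmul_eq_mul]
  constructor
  · rintro ⟨c, hc⟩
    have hn : (n : ℤ) ∣ x - c * y :=
      (ZMod.intCast_eq_intCast_iff_dvd_sub _ _ _).1 (by simpa using hc)
    simpa using dvd_add (dvd_trans (Int.gcd_dvd_left _ _) hn)
      ((Int.gcd_dvd_right (n : ℤ) y).mul_left c)
  · rintro ⟨q, rfl⟩
    refine ⟨q * Int.gcdB n y, ?_⟩
    rw [Int.gcd_eq_gcd_ab]
    push_cast
    rw [ZMod.natCast_self]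
    ring

theorem ofAdd_intCast_mem_zpowers_natCast_iff (hkn : k ∣ n) (x : ℤ) :
    ofAdd (x : ZMod n) ∈ zpowers (ofAdd (k : ZMod n)) ↔ (k : ℤ) ∣ x := by
  rw [← Int.cast_natCast, ofAdd_intCast_mem_zpowers_iff, Int.gcd_natCast_natCast,
    Nat.gcd_eq_right hkn]

theorem exists_ofAdd_intCast_eq (v : Multiplicative (ZMod n)) :
    ∃ x : ℤ, ofAdd (x : ZMod n) = v :=
  let ⟨x, hx⟩ := ZMod.intCast_surjective (toAdd v)
  ⟨x, by rw [hx]; rfl⟩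

variable (hkn : k ∣ n)
include hkn

theorem mk_ofAdd_intCast_eq_iff (x y : ℤ) :
    (QuotientGroup.mk (ofAdd (x : ZMod n)) :
        Multiplicative (ZMod n) ⧸ zpowers (ofAdd (k : ZMod n)))
      = QuotientGroup.mk (ofAdd (y : ZMod n)) ↔ (k : ℤ) ∣ y - x := by
  rw [QuotientGroup.eq, ← ofAdd_neg, ← ofAdd_add, ← Int.cast_neg, ← Int.cast_add,
    ofAdd_intCast_mem_zpowers_natCast_iff hkn, neg_add_eq_sub]

theorem mk_ofAdd_intCast_pow_eq_one_iff (x : ℤ) (R : ℕ) :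
    (QuotientGroup.mk (ofAdd (x : ZMod n)) :
        Multiplicative (ZMod n) ⧸ zpowers (ofAdd (k : ZMod n))) ^ R = 1 ↔ (k : ℤ) ∣ R * x := by
  rw [← QuotientGroup.mk_pow, QuotientGroup.eq_one_iff, ← ofAdd_nsmul, nsmul_eq_mul,
    show (R : ZMod n) * x = ((R * x : ℤ) : ZMod n) by push_cast; rfl,
    ofAdd_intCast_mem_zpowers_natCast_iff hkn]

theorem gcd_dvd_of_orderOf_mk_dvd (hk : k ≠ 0) {a b : ℤ}
    (h : orderOf (QuotientGroup.mk (ofAdd (a : ZMod n)) :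
        Multiplicative (ZMod n) ⧸ zpowers (ofAdd (k : ZMod n)))
      ∣ orderOf (QuotientGroup.mk (ofAdd (b : ZMod n)) :
        Multiplicative (ZMod n) ⧸ zpowers (ofAdd (k : ZMod n)))) :
    (Int.gcd k b : ℤ) ∣ a := by
  obtain ⟨r, hkr⟩ : Int.gcd k b ∣ k := by simpa using Int.gcd_dvd_natAbs_left (k : ℤ) b
  have hkr' : (k : ℤ) = Int.gcd k b * r := by exact_mod_cast hkr
  have hr : (r : ℤ) ≠ 0 := by
    rintro h0; rw [Int.natCast_eq_zero.1 h0, mul_zero] at hkr; exact hk hkr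
  have hb : (k : ℤ) ∣ r * b :=
    (dvd_of_eq hkr').trans (by rw [mul_comm]; exact mul_dvd_mul_left _ (Int.gcd_dvd_right _ _))
  rw [← mk_ofAdd_intCast_pow_eq_one_iff hkn, ← orderOf_dvd_iff_pow_eq_one] at hb
  have ha :=
    (mk_ofAdd_intCast_pow_eq_one_iff hkn a r).1 (orderOf_dvd_iff_pow_eq_one.1 (h.trans hb))
  exact Int.dvd_of_mul_dvd_mul_right hr ((dvd_of_eq hkr'.symm).trans (mul_comm a r ▸ ha))

end ZModCoset

theorem exists_fiber_equiv_orderOf_dvd_s8 {n k : ℕ} (hn : n ≠ 0) (hkn : k ∣ n)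
    {A B : Multiplicative (ZMod n) ⧸ zpowers (ofAdd (k : ZMod n))}
    (hAB : orderOf A ∣ orderOf B) :
    ∃ τ : {v : Multiplicative (ZMod n) // (v : _ ⧸ zpowers (ofAdd (k : ZMod n))) = A}
        ≃ {v : Multiplicative (ZMod n) // (v : _ ⧸ zpowers (ofAdd (k : ZMod n))) = B},
      ∀ v, orderOf v.1 ∣ orderOf (τ v).1 := by
  have hk : k ≠ 0 := by rintro rfl; exact hn (zero_dvd_iff.1 hkn)
  obtain ⟨a, rfl⟩ := QuotientGroup.mk_surjective A
  obtain ⟨b, rfl⟩ := QuotientGroup.mk_surjective B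
  obtain ⟨a, rfl⟩ := exists_ofAdd_intCast_eq a
  obtain ⟨b, rfl⟩ := exists_ofAdd_intCast_eq b
  have hba := gcd_dvd_of_orderOf_mk_dvd hkn hk hAB
  set c : Multiplicative (ZMod n) := ofAdd (cosetShift n k a b : ZMod n)
  have hc : (QuotientGroup.mk (ofAdd (a : ZMod n) * c) :
      Multiplicative (ZMod n) ⧸ zpowers (ofAdd (k : ZMod n)))
      = QuotientGroup.mk (ofAdd (b : ZMod n)) := by
    rw [← ofAdd_add, ← Int.cast_add, mk_ofAdd_intCast_eq_iff hkn]
    exact (dvd_neg.2 (natCast_dvd_cosetShift_sub hn hba)).trans (dvd_of_eq (by ring))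
  refine ⟨Equiv.subtypeEquiv (Equiv.mulRight c) fun v => ?_, fun ⟨v, hv⟩ => ?_⟩
  · rw [Equiv.coe_mulRight, QuotientGroup.mk_mul, ← hc, QuotientGroup.mk_mul, mul_left_inj]
  · obtain ⟨x, rfl⟩ := exists_ofAdd_intCast_eq v
    refine orderOf_dvd_of_mem_zpowers ?_
    change ofAdd (x : ZMod n) ∈ zpowers (ofAdd (x : ZMod n) * c)
    rw [← ofAdd_add, ← Int.cast_add, ofAdd_intCast_mem_zpowers_iff]
    exact gcd_add_cosetShift_dvd hn hk hba ((mk_ofAdd_intCast_eq_iff hkn a x).1 hv.symm)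

/-- Gluing along cosets of a normal subgroup: if `G/N → C_n/C_{n,|N|}` admits an
order-divisibility bijection `θ`, and every coset `xN` admits an order-divisibility
bijection onto each coset `u C_{n,|N|}` of the same order, then `G` admits a global
order-divisibility bijection onto `C_n`. -/
theorem stmt8 {G : Type*} [Group G] [Fintype G] (n : ℕ) (hn : n = Fintype.card G)
    (N : Subgroup G) [N.Normal]
    (θ : (G ⧸ N) ≃ (Multiplicative (ZMod n) ⧸ Cc n (Nat.card N)))
    (hθ : ∀ y : G ⧸ N, orderOf y ∣ orderOf (θ y))
    (hcoset : ∀ (x : G) (u : Multiplicative (ZMod n)),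
      orderOf (QuotientGroup.mk x : G ⧸ N)
        = orderOf (QuotientGroup.mk u : Multiplicative (ZMod n) ⧸ Cc n (Nat.card N)) →
      ∃ β : {y : G // ∃ h ∈ N, y = x * h} ≃
          {v : Multiplicative (ZMod n) // ∃ w ∈ Cc n (Nat.card N), v = u * w},
        ∀ y, orderOf (y : {y : G // ∃ h ∈ N, y = x * h}).1 ∣ orderOf (β y).1) :
    ∃ f : G ≃ Multiplicative (ZMod n), ∀ x : G, orderOf x ∣ orderOf (f x) := by
  have hn0 : n ≠ 0 := hn ▸ Fintype.card_ne_zero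
  have : NeZero n := ⟨hn0⟩
  have hkn : n / Nat.card N ∣ n := Nat.div_dvd_of_dvd <| by
    rw [hn, ← Nat.card_eq_fintype_card]; exact Subgroup.card_subgroup_dvd_card N
  refine exists_equiv_forall_of_fiberwise (R := fun x v => orderOf x ∣ orderOf v)
    QuotientGroup.mk QuotientGroup.mk θ fun y => ?_
  set A := θ y ^ (orderOf (θ y) / orderOf y)
  have hA : orderOf A = orderOf y := orderOf_pow_orderOf_div (orderOf_pos _).ne' (hθ y)
  obtain ⟨β, hβ⟩ := hcoset y.out A.out (by rw [QuotientGroup.out_eq', QuotientGroup.out_eq', hA])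
  have hAθ : orderOf A ∣ orderOf (θ y) := hA ▸ hθ y
  obtain ⟨τ, hτ⟩ := exists_fiber_equiv_orderOf_dvd_s8 (k := n / Nat.card N) hn0 hkn hAθ
  exact ⟨(QuotientGroup.outCosetEquivFiber N y).symm.trans
      ((β.trans (QuotientGroup.outCosetEquivFiber _ A)).trans τ),
    fun g => (hβ ((QuotientGroup.outCosetEquivFiber N y).symm g)).trans (hτ _)⟩
end
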